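/- For |u| < 1 with u ≠ 0, substituting λ = λ_min(u) = (1 + u - √(1-u²))/(2u) into λ·(2u/β) + β⁻¹ log(λ² + (1-λ)²) yields β⁻¹(-1 + u + √(1-u²) + log((1 - √(1-u²))/u²)); that is, Υ(x, β) = β⁻¹(-1 + u + √(1-u²) + log((1 - √(1-u²))/u²)) where u = βx/2 and 0 < |u| < 1. -/

import Mathlib

noncomputable def succRy2 (β x : ℝ) : ℝ :=
  sInf ((fun l => l * x + β⁻¹ * Real.log (l^2 + (1-l)^2)) '' Set.Icc (0:ℝ) 1)

/-!
Write `x = 2u/β` and `s = √(1 - u²)`, so that `s² + u² = 1`. The derivative of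
`l ↦ l x + β⁻¹ log (l² + (1 - l)²)` factors as
`2 (l - l₀) (2ul - u + 1 + s) / (β (l² + (1 - l)²))` with `l₀ = (u - 1 + s) / (2u)`
(this is `1 - λ_min(u)` in the notation of the statement). Since `|u| ≤ 1`, the middle factor
is nonnegative on `[0, 1]`, so the objective decreases up to `l₀ ∈ [0, 1]` and increases after
it. At `l₀` one has `l₀ x = β⁻¹ (u - 1 + s)` and `l₀² + (1 - l₀)² = (1 - s) / u²`, which gives
the closed form.
-/

open Real Set

theorem IsMinOn.csInf_image_eq {α β : Type*} [ConditionallyCompleteLinearOrder β] {f : α → β}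
    {s : Set α} {a : α} (h : IsMinOn f s a) (ha : a ∈ s) : sInf (f '' s) = f a := by
  rw [image_eq_range]
  exact h.iInf_eq ha

noncomputable def succRy2Objective (β x l : ℝ) : ℝ := l * x + β⁻¹ * log (l ^ 2 + (1 - l) ^ 2)

lemma sq_add_one_sub_sq_pos (t : ℝ) : 0 < t ^ 2 + (1 - t) ^ 2 := by
  nlinarith [sq_nonneg (2 * t - 1)]

lemma hasDerivAt_succRy2Objective (β x t : ℝ) :
    HasDerivAt (succRy2Objective β x) (x + β⁻¹ * ((4 * t - 2) / (t ^ 2 + (1 - t) ^ 2))) t := by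
  have hq : HasDerivAt (fun l : ℝ => l ^ 2 + (1 - l) ^ 2) (4 * t - 2) t :=
    (((hasDerivAt_id' t).fun_pow 2).add (((hasDerivAt_id' t).const_sub 1).fun_pow 2)).congr_deriv
      (by ring)
  exact (hasDerivAt_mul_const x).add ((hq.log (sq_add_one_sub_sq_pos t).ne').const_mul β⁻¹)

lemma sq_add_one_sub_sq_critical {u s : ℝ} (hu : u ≠ 0) (hus : s ^ 2 + u ^ 2 = 1) :
    ((u - 1 + s) / (2 * u)) ^ 2 + (1 - (u - 1 + s) / (2 * u)) ^ 2 = (1 - s) / u ^ 2 := by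
  field_simp
  linear_combination 2 * hus

lemma critical_mem_Icc {u s : ℝ} (hu : u ≠ 0) (hus : s ^ 2 + u ^ 2 = 1) (hs : 0 ≤ s) :
    (u - 1 + s) / (2 * u) ∈ Icc (0 : ℝ) 1 := by
  set l := (u - 1 + s) / (2 * u) with hl
  have hprod : 2 * u ^ 2 * (l * (1 - l)) = s * (1 - s) := by
    rw [hl]; field_simp; linear_combination hus
  have hs1 : s ≤ 1 := by nlinarith
  have hu2 : 0 < u ^ 2 := by positivity
  have hl01 : 0 ≤ l * (1 - l) := by nlinarith [mul_nonneg hs (sub_nonneg.2 hs1)]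
  constructor <;> nlinarith [sq_nonneg l, sq_nonneg (1 - l)]

lemma hasDerivAt_succRy2Objective_factor {β u s : ℝ} (hβ : β ≠ 0) (hu : u ≠ 0)
    (hus : s ^ 2 + u ^ 2 = 1) (t : ℝ) :
    HasDerivAt (succRy2Objective β (2 * u / β))
      (2 * (t - (u - 1 + s) / (2 * u)) * (2 * u * t - u + 1 + s) / (β * (t ^ 2 + (1 - t) ^ 2)))
      t := by
  refine (hasDerivAt_succRy2Objective β _ t).congr_deriv ?_
  have := (sq_add_one_sub_sq_pos t).ne'
  field_simp
  linear_combination hus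

lemma factor_nonneg_of_mem_Icc {u s t : ℝ} (hus : s ^ 2 + u ^ 2 = 1) (hs : 0 ≤ s)
    (ht : t ∈ Icc (0 : ℝ) 1) : 0 ≤ 2 * u * t - u + 1 + s := by
  obtain ⟨ht0, ht1⟩ := ht
  have hu_ge : -1 ≤ u := by nlinarith
  have hu_le : u ≤ 1 := by nlinarith
  rcases le_total 0 u with hu | hu <;> nlinarith

theorem isMinOn_succRy2Objective {β u s : ℝ} (hβ : 0 < β) (hu : u ≠ 0)
    (hus : s ^ 2 + u ^ 2 = 1) (hs : 0 ≤ s) :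
    IsMinOn (succRy2Objective β (2 * u / β)) (Icc 0 1) ((u - 1 + s) / (2 * u)) := by
  set l := (u - 1 + s) / (2 * u)
  have hl : l ∈ Icc (0 : ℝ) 1 := critical_mem_Icc hu hus hs
  have hf := hasDerivAt_succRy2Objective_factor hβ.ne' hu hus
  have hcont : Continuous (succRy2Objective β (2 * u / β)) :=
    continuous_iff_continuousAt.2 fun t => (hf t).continuousAt
  have hdiff : Differentiable ℝ (succRy2Objective β (2 * u / β)) :=
    fun t => (hf t).differentiableAt
  refine isMinOn_Icc_of_deriv hcont.continuousAt hcont.continuousAt hcont.continuousAt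
    hdiff.differentiableOn hdiff.differentiableOn (fun t ht => ?_) (fun t ht => ?_)
  · have hF := factor_nonneg_of_mem_Icc hus hs ⟨ht.1.le, ht.2.le.trans hl.2⟩
    have hq := sq_add_one_sub_sq_pos t
    rw [(hf t).deriv]
    exact div_nonpos_of_nonpos_of_nonneg
      (mul_nonpos_of_nonpos_of_nonneg (by linarith [ht.2]) hF) (by positivity)
  · have hF := factor_nonneg_of_mem_Icc hus hs ⟨hl.1.trans ht.1.le, ht.2.le⟩
    have hq := sq_add_one_sub_sq_pos t
    have htl : 0 ≤ t - l := by linarith [ht.1]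
    rw [(hf t).deriv]
    positivity

lemma succRy2Objective_critical {β u s : ℝ} (hβ : β ≠ 0) (hu : u ≠ 0) (hus : s ^ 2 + u ^ 2 = 1) :
    succRy2Objective β (2 * u / β) ((u - 1 + s) / (2 * u)) =
      β⁻¹ * (-1 + u + s + log ((1 - s) / u ^ 2)) := by
  rw [succRy2Objective, sq_add_one_sub_sq_critical hu hus]
  field_simp
  ring

theorem succRy2_closed_form (β : ℝ) (hβ : 0 < β) (x : ℝ)
    (hx0 : x ≠ 0) (hx : |x| < 2 / β) :
    succRy2 β x =
      β⁻¹ * (-1 + (β * x / 2) + Real.sqrt (1 - (β * x / 2)^2) +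
        Real.log ((1 - Real.sqrt (1 - (β * x / 2)^2)) / (β * x / 2)^2)) := by
  set u := β * x / 2
  have hxu : x = 2 * u / β := by simp only [u]; field_simp
  have hu : u ≠ 0 := by positivity
  have hu1 : |u| < 1 := by
    rw [abs_div, abs_mul, abs_of_pos hβ, abs_two]
    rw [lt_div_iff₀ hβ] at hx
    linarith
  have hus : √(1 - u ^ 2) ^ 2 + u ^ 2 = 1 := by
    rw [sq_sqrt (by nlinarith [abs_mul_abs_self u, abs_nonneg u])]; ring
  change sInf (succRy2Objective β x '' Icc 0 1) = _
  rw [hxu, (isMinOn_succRy2Objective hβ hu hus (sqrt_nonneg _)).csInf_image_eq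
    (critical_mem_Icc hu hus (sqrt_nonneg _)), succRy2Objective_critical hβ.ne' hu hus]
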